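/- arXiv:1007.1983 — 7 statements merged into one kernel-verified Lean document; each statement's English description precedes it below -/
import Mathlib

section
/- If V is a linear subspace of the n×n matrices over a field K such that every matrix in V is diagonalizable over K, then dim V ≤ n(n+1)/2. -/
open Matrix
def IsDiagonalizable {K : Type*} [Field K] {m : Type*} [Fintype m] [DecidableEq m]
    (A : Matrix m m K) : Prop :=
  ∃ P : Matrix m m K, IsUnit P ∧ (P⁻¹ * A * P).IsDiag
def FormallyReal (K : Type*) [Field K] : Prop := ¬ IsSumSq (-1 : K)
def Pythagorean (K : Type*) [Field K] : Prop := ∀ a b : K, ∃ c : K, a ^ 2 + b ^ 2 = c ^ 2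

/-- Strictly upper triangular matrices are nilpotent. -/
lemma aux_strict_nilp {K : Type*} [Field K] {n : ℕ} (A : Matrix (Fin n) (Fin n) K)
    (h : ∀ i j : Fin n, j ≤ i → A i j = 0) : A ^ n = 0 := by
  have ht : A.BlockTriangular id := fun i j hij => h i j (le_of_lt hij)
  have hc : A.charpoly = Polynomial.X ^ n := by
    rw [Matrix.charpoly_of_upperTriangular A ht]
    have : ∀ i : Fin n, A i i = 0 := fun i => h i i le_rfl
    simp [this, Finset.prod_const, Finset.card_univ]
  have := Matrix.aeval_self_charpoly A
  rwa [hc, map_pow, Polynomial.aeval_X] at this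

/-- A diagonalizable nilpotent matrix is zero. -/
lemma aux_diag_nilp {K : Type*} [Field K] {n : ℕ} (A : Matrix (Fin n) (Fin n) K)
    (hd : IsDiagonalizable A) (hn : A ^ n = 0) : A = 0 := by
  rcases Nat.eq_zero_or_pos n with hn0 | hn0
  · subst hn0; exact Subsingleton.elim _ _
  obtain ⟨P, hP, hdiag⟩ := hd
  have hPd : IsUnit P.det := (Matrix.isUnit_iff_isUnit_det P).mp hP
  have h1 : P⁻¹ * P = 1 := Matrix.nonsing_inv_mul P hPd
  have h2 : P * P⁻¹ = 1 := Matrix.mul_nonsing_inv P hPd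
  set D := P⁻¹ * A * P with hD
  have hpow : ∀ k : ℕ, D ^ k = P⁻¹ * A ^ k * P := by
    intro k
    induction k with
    | zero => simp [h1]
    | succ k ih =>
      rw [pow_succ, pow_succ, ih, hD]
      rw [Matrix.mul_assoc, Matrix.mul_assoc, Matrix.mul_assoc]
      rw [← Matrix.mul_assoc P P⁻¹, h2, Matrix.one_mul]
      rw [Matrix.mul_assoc, Matrix.mul_assoc]
  have hDn : D ^ n = 0 := by rw [hpow, hn, Matrix.mul_zero, Matrix.zero_mul]
  have hDd : D = Matrix.diagonal D.diag := hdiag.diagonal_diag.symm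
  have hD0 : D = 0 := by
    rw [hDd] at hDn ⊢
    rw [Matrix.diagonal_pow] at hDn
    have hpe : ∀ i, D.diag i ^ n = 0 := by
      intro i
      have := congrArg (fun M => M i i) hDn
      simpa using this
    have : ∀ i, D.diag i = 0 := fun i =>
      pow_eq_zero_iff hn0.ne' |>.mp (hpe i)
    simp [funext this]
  have h0 : P⁻¹ * A * P = 0 := hD0
  calc A = P * (P⁻¹ * A * P) * P⁻¹ := by
        rw [← Matrix.mul_assoc, ← Matrix.mul_assoc, h2, Matrix.one_mul,
          Matrix.mul_assoc, h2, Matrix.mul_one]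
    _ = 0 := by rw [h0, Matrix.mul_zero, Matrix.zero_mul]

lemma aux_card (n : ℕ) :
    Fintype.card {p : Fin n × Fin n // p.2 ≤ p.1} = n * (n + 1) / 2 := by
  have e : {p : Fin n × Fin n // p.2 ≤ p.1} ≃ Σ i : Fin n, Fin (i.1 + 1) :=
    { toFun := fun p => ⟨p.1.1, ⟨p.1.2.1, Nat.lt_succ_of_le p.2⟩⟩
      invFun := fun x => ⟨(x.1, ⟨x.2.1, lt_of_lt_of_le x.2.2 x.1.2⟩),
        Fin.mk_le_mk.mpr (Nat.le_of_lt_succ x.2.2)⟩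
      left_inv := fun p => by ext <;> rfl
      right_inv := fun x => by rcases x with ⟨i, j⟩; rfl }
  rw [Fintype.card_congr e, Fintype.card_sigma]
  simp only [Fintype.card_fin]
  rw [Fin.sum_univ_eq_sum_range (fun i => i + 1) n]
  have : ∑ i ∈ Finset.range n, (i + 1) = ∑ i ∈ Finset.range (n + 1), i := by
    rw [Finset.sum_range_succ' (fun i => i) n]
    simp
  rw [this, Finset.sum_range_id]
  simp [Nat.mul_comm]

theorem stmt0 {K : Type*} [Field K] {n : ℕ}
    (V : Submodule K (Matrix (Fin n) (Fin n) K))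
    (hV : ∀ A ∈ V, IsDiagonalizable A) :
    Module.finrank K V ≤ n * (n + 1) / 2 := by
  -- the linear map recording the lower-triangular entries (j ≤ i)
  let f : V →ₗ[K] ({p : Fin n × Fin n // p.2 ≤ p.1} → K) :=
    { toFun := fun A => fun p => (A : Matrix (Fin n) (Fin n) K) p.1.1 p.1.2
      map_add' := fun A B => by ext p; simp
      map_smul' := fun c A => by ext p; simp }
  have hinj : Function.Injective f := by
    rw [← LinearMap.ker_eq_bot, Submodule.eq_bot_iff]
    rintro ⟨A, hA⟩ hA0
    have hzero : ∀ i j : Fin n, j ≤ i → A i j = 0 := by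
      intro i j hij
      have := congrFun hA0 ⟨(i, j), hij⟩
      exact this
    have : A = 0 := aux_diag_nilp A (hV A hA) (aux_strict_nilp A hzero)
    exact Subtype.ext this
  have := LinearMap.finrank_le_finrank_of_injective hinj
  rwa [Module.finrank_pi, aux_card] at this
end

section
/- Every diagonalizable linear subspace of Mat_2(K) of dimension 3 is conjugate to the subspace S_2(K) of 2×2 symmetric matrices; that is, there exists P ∈ GL_2(K) with V = P·S_2(K)·P^{-1}. -/
open Matrix
/-!
A codimension-one subspace `V` of `Mat₂(K)` is `{A | tr (M * A) = 0}` for some matrix `M`.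
A diagonalizable `2 × 2` matrix with a double eigenvalue is scalar, and a traceless diagonalizable
one has `-det` equal to the square of an eigenvalue. Testing this on suitable elements of `V`
(a Jordan block, the elementary matrices `E₀₁` and `E₁₀`, and a traceless matrix whose determinant
is a square multiple of `det M`) shows that `M` is traceless with nonzero off-diagonal entries and
`det M = d ^ 2` with `d ≠ 0`. Such an `M` is conjugate to `d • !![0, -1; 1, 0]`, and the matrices
`S` with `tr (!![0, -1; 1, 0] * S) = 0` are exactly the symmetric ones.
-/

section

variable {K : Type*} [Field K]

theorem Submodule.exists_dual_ker_eq_of_finrank_add_one {E : Type*} [AddCommGroup E] [Module K E]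
    [FiniteDimensional K E] (V : Submodule K E)
    (h : Module.finrank K V + 1 = Module.finrank K E) :
    ∃ φ : Module.Dual K E, LinearMap.ker φ = V := by
  have hquot : Module.finrank K (E ⧸ V) = Module.finrank K K := by
    have := V.finrank_quotient_add_finrank
    rw [Module.finrank_self]
    omega
  exact ⟨(LinearEquiv.ofFinrankEq _ _ hquot).toLinearMap ∘ₗ V.mkQ,
    by rw [LinearEquiv.ker_comp, Submodule.ker_mkQ]⟩

theorem Matrix.exists_eq_trace_mul {n : Type*} [Fintype n] [DecidableEq n]
    (φ : Module.Dual K (Matrix n n K)) : ∃ M : Matrix n n K, ∀ A, φ A = (M * A).trace := by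
  refine ⟨of fun i j => φ (single j i 1), fun A => ?_⟩
  conv_lhs => rw [matrix_eq_sum_single A]
  simp only [map_sum, trace, mul_apply, diag_apply, of_apply]
  rw [Finset.sum_comm]
  refine Finset.sum_congr rfl fun i _ => Finset.sum_congr rfl fun j _ => ?_
  rw [show single j i (A j i) = A j i • single j i (1 : K) by simp [smul_single], map_smul,
    smul_eq_mul, mul_comm]

theorem Matrix.isSymm_fin_two_iff {α : Type*} {S : Matrix (Fin 2) (Fin 2) α} :
    S.IsSymm ↔ S 0 1 = S 1 0 := by
  simp [IsSymm.ext_iff, Fin.forall_fin_two, eq_comm]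

namespace IsDiagonalizable

variable {A : Matrix (Fin 2) (Fin 2) K}

theorem exists_trace_det_eq (hA : IsDiagonalizable A) :
    ∃ x y : K, A.trace = x + y ∧ A.det = x * y ∧ (x = y → A = x • 1) := by
  obtain ⟨P, hP, hD⟩ := hA
  have hPdet : IsUnit P.det := (isUnit_iff_isUnit_det P).mp hP
  obtain ⟨x, y, hxy⟩ : ∃ x y : K, P⁻¹ * A * P = diagonal ![x, y] :=
    ⟨_, _, hD.diagonal_diag.symm.trans (by congr 1; ext i; fin_cases i <;> rfl)⟩
  have hA : A = P * diagonal ![x, y] * P⁻¹ := by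
    rw [← hxy, Matrix.mul_assoc, Matrix.mul_assoc, mul_nonsing_inv _ hPdet, Matrix.mul_one,
      ← Matrix.mul_assoc, mul_nonsing_inv _ hPdet, Matrix.one_mul]
  refine ⟨x, y, ?_, ?_, ?_⟩
  · rw [hA, trace_mul_cycle, nonsing_inv_mul _ hPdet, Matrix.one_mul, trace_diagonal,
      Fin.sum_univ_two]
    rfl
  · rw [hA, det_conj hP, det_diagonal, Fin.prod_univ_two]
    rfl
  · rintro rfl
    rw [hA, show diagonal ![x, x] = x • (1 : Matrix (Fin 2) (Fin 2) K) by
        ext i j; fin_cases i <;> fin_cases j <;> simp,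
      Matrix.mul_smul, Matrix.mul_one, Matrix.smul_mul, mul_nonsing_inv _ hPdet]

theorem isDiag_of_trace_sq_eq (hA : IsDiagonalizable A) (h : A.trace ^ 2 = 4 * A.det) :
    A.IsDiag := by
  obtain ⟨x, y, htr, hdet, hscalar⟩ := hA.exists_trace_det_eq
  have hxy : x = y := by
    have : (x - y) ^ 2 = 0 := by rw [htr, hdet] at h; linear_combination h
    exact sub_eq_zero.mp (pow_eq_zero_iff two_ne_zero |>.mp this)
  rw [hscalar hxy]
  exact isDiag_smul_one _ x

theorem exists_sq_eq_neg_det (hA : IsDiagonalizable A) (htr : A.trace = 0) (hnd : ¬A.IsDiag) :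
    ∃ x : K, x ≠ 0 ∧ x ^ 2 = -A.det := by
  obtain ⟨x, y, htr', hdet, hscalar⟩ := hA.exists_trace_det_eq
  have hy : y = -x := by linear_combination htr'.symm.trans htr
  refine ⟨x, fun hx => hnd ?_, by rw [hdet, hy]; ring⟩
  rw [hscalar (by rw [hy, hx, neg_zero])]
  exact isDiag_smul_one _ x

end IsDiagonalizable

theorem not_isDiagonalizable_single {i j : Fin 2} (hij : i ≠ j) {c : K} (hc : c ≠ 0) :
    ¬IsDiagonalizable (single i j c) := by
  intro h
  have := h.isDiag_of_trace_sq_eq (by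
    rw [trace_single_eq_of_ne _ _ _ hij, det_fin_two]
    fin_cases i <;> fin_cases j <;> simp_all)
  exact hc (by simpa using this hij)

namespace Matrix

variable {M : Matrix (Fin 2) (Fin 2) K}

section

variable (hM : ∀ A, (M * A).trace = 0 → IsDiagonalizable A)
include hM

theorem trace_eq_zero_of_forall_isDiagonalizable : M.trace = 0 := by
  by_contra htr
  set l := -M 1 0 / M.trace
  have hA : IsDiagonalizable !![l, 1; 0, l] := hM _ (by
    rw [eta_fin_two M]
    rw [trace_fin_two] at htr
    simp [trace_fin_two, l]
    field_simp
    ring)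
  have := hA.isDiag_of_trace_sq_eq (by simp [trace_fin_two, det_fin_two]; ring)
  exact one_ne_zero (this (by decide : (0 : Fin 2) ≠ 1))

theorem ne_zero_of_forall_isDiagonalizable {i j : Fin 2} (hij : i ≠ j) : M i j ≠ 0 := fun h =>
  not_isDiagonalizable_single hij.symm one_ne_zero (hM _ (by simp [trace_mul_single, h]))

theorem exists_sq_eq_det_of_forall_isDiagonalizable : ∃ d : K, d ≠ 0 ∧ d ^ 2 = M.det := by
  have htr := trace_eq_zero_of_forall_isDiagonalizable hM
  have hu : M 0 1 ≠ 0 := ne_zero_of_forall_isDiagonalizable hM (by decide)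
  set m := M 0 0
  set u := M 0 1
  set v := M 1 0
  have hM11 : M 1 1 = -m := by rw [trace_fin_two] at htr; linear_combination htr
  -- `-det` of this traceless element of the hyperplane is `u ^ 2 * det M`.
  have hA : IsDiagonalizable !![m * u, u ^ 2; -(2 * m ^ 2 + u * v), -(m * u)] := hM _ (by
    rw [eta_fin_two M]
    simp [trace_fin_two, hM11]
    ring)
  obtain ⟨x, hx, hx2⟩ := hA.exists_sq_eq_neg_det (by simp [trace_fin_two])
    (fun h => pow_ne_zero 2 hu (h (by decide : (0 : Fin 2) ≠ 1)))
  refine ⟨x / u, div_ne_zero hx hu, ?_⟩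
  rw [det_fin_two_of] at hx2
  rw [det_fin_two, hM11]
  field_simp
  linear_combination hx2

end

theorem exists_conj_isSymm_eq_setOf_trace_mul_eq_zero (htr : M.trace = 0) (hv : M 1 0 ≠ 0)
    {d : K} (hd : d ≠ 0) (hdet : d ^ 2 = M.det) :
    ∃ P : Matrix (Fin 2) (Fin 2) K, IsUnit P ∧
      (fun S => P * S * P⁻¹) '' {S | S.IsSymm} = {A | (M * A).trace = 0} := by
  have hM11 : M 1 1 = -M 0 0 := by rw [trace_fin_two] at htr; linear_combination htr
  rw [det_fin_two, hM11] at hdet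
  set P : Matrix (Fin 2) (Fin 2) K := !![1, M 0 0 / d; 0, M 1 0 / d]
  set Q : Matrix (Fin 2) (Fin 2) K := !![1, -(M 0 0 / M 1 0); 0, d / M 1 0]
  have hPQ : P * Q = 1 := by
    simp [P, Q, one_fin_two]
    field_simp
    simp
  have hQP : Q * P = 1 := mul_eq_one_comm.mp hPQ
  have hQMP : Q * M * P = d • !![0, -1; 1, 0] := by
    rw [eta_fin_two M]
    simp [P, Q, hM11]
    field_simp
    norm_num
    linear_combination hdet
  have htrace (A : Matrix (Fin 2) (Fin 2) K) :
      (M * A).trace = d * ((Q * A * P) 0 1 - (Q * A * P) 1 0) := calc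
    (M * A).trace = (M * (P * (Q * A * P) * Q)).trace := by
      simp only [← Matrix.mul_assoc, hPQ, Matrix.one_mul]
      simp only [Matrix.mul_assoc, hPQ, Matrix.mul_one]
    _ = (Q * M * P * (Q * A * P)).trace := by
      rw [show M * (P * (Q * A * P) * Q) = M * P * (Q * A * P) * Q by
        simp only [Matrix.mul_assoc], trace_mul_comm]
      simp only [Matrix.mul_assoc]
    _ = d * ((Q * A * P) 0 1 - (Q * A * P) 1 0) := by
      generalize Q * A * P = S
      rw [hQMP, Matrix.smul_mul, trace_smul, smul_eq_mul]
      congr 1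
      simp [trace_fin_two, vecMul, dotProduct, Fin.sum_univ_two]
      ring
  refine ⟨P, isUnit_iff_exists.mpr ⟨Q, hPQ, hQP⟩, ?_⟩
  rw [inv_eq_right_inv hPQ, Set.image_eq_preimage_of_inverse (g := fun A => Q * A * P)]
  · ext A
    simp [isSymm_fin_two_iff, htrace, hd, sub_eq_zero]
  · intro S; simp only [← Matrix.mul_assoc, hQP, Matrix.one_mul]; simp [Matrix.mul_assoc, hQP]
  · intro A; simp only [← Matrix.mul_assoc, hPQ, Matrix.one_mul]; simp [Matrix.mul_assoc, hPQ]

end Matrix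

end

theorem stmt4 {K : Type*} [Field K]
    (V : Submodule K (Matrix (Fin 2) (Fin 2) K))
    (hV : ∀ A ∈ V, IsDiagonalizable A)
    (hdim : Module.finrank K V = 3) :
    ∃ P : Matrix (Fin 2) (Fin 2) K, IsUnit P ∧
      (V : Set (Matrix (Fin 2) (Fin 2) K)) = (fun S => P * S * P⁻¹) '' {S | S.IsSymm} := by
  obtain ⟨φ, hφ⟩ := V.exists_dual_ker_eq_of_finrank_add_one (by simp [hdim, Module.finrank_matrix])
  obtain ⟨M, hM⟩ := exists_eq_trace_mul φ
  have hVM : (V : Set (Matrix (Fin 2) (Fin 2) K)) = {A | (M * A).trace = 0} := by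
    ext A; simp [← hφ, hM]
  have hdiag (A : Matrix (Fin 2) (Fin 2) K) (hA : (M * A).trace = 0) : IsDiagonalizable A :=
    hV A (by simpa [← hφ, hM] using hA)
  obtain ⟨d, hd, hdet⟩ := exists_sq_eq_det_of_forall_isDiagonalizable hdiag
  obtain ⟨P, hP, hPV⟩ := exists_conj_isSymm_eq_setOf_trace_mul_eq_zero
    (trace_eq_zero_of_forall_isDiagonalizable hdiag)
    (ne_zero_of_forall_isDiagonalizable hdiag (by decide)) hd hdet
  exact ⟨P, hP, hVM.trans hPV.symm⟩
end

section
/- The subspace S_2(K) of symmetric 2×2 matrices over K consists only of diagonalizable matrices if and only if K is formally real and Pythagorean. -/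
/-!
If every symmetric `2 × 2` matrix is diagonalizable, apply this to `A = !![a, b; b, -a]`:
since `A * A = (a ^ 2 + b ^ 2) • 1`, the square of any diagonal entry of a diagonal form of `A`
equals `a ^ 2 + b ^ 2`, so `K` is Pythagorean. Then a sum of squares equal to `-1` would be a
square `c ^ 2`, and `!![1, c; c, -1]` would be a nonzero diagonalizable matrix with zero square.

Conversely, in a formally real Pythagorean field `!![a, b; b, d]` with `b ≠ 0` has the two
eigenvalues `(a + d ± e) / 2`, where `e ^ 2 = (a - d) ^ 2 + (2 * b) ^ 2`; they are distinct since
`e = 0` would make `-1` a square, and the eigenvectors `(b, λ - a)` are an eigenbasis.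
-/

open Matrix
section

variable {K : Type*} [Field K]

namespace FormallyReal

lemma eq_zero_of_sq_add_sq_eq_zero (hK : FormallyReal K) {x y : K} (h : x ^ 2 + y ^ 2 = 0) :
    y = 0 := by
  by_contra hy
  apply hK
  have h' : (-1 : K) = x / y * (x / y) := by
    field_simp
    linear_combination -h
  rw [h']
  exact IsSumSq.mul_self _

lemma two_ne_zero (hK : FormallyReal K) : (2 : K) ≠ 0 := fun h =>
  one_ne_zero (hK.eq_zero_of_sq_add_sq_eq_zero (x := 1) (by linear_combination h))

end FormallyReal

lemma Pythagorean.isSquare_of_isSumSq (hK : Pythagorean K) {s : K} (hs : IsSumSq s) :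
    IsSquare s := by
  induction hs with
  | zero => exact ⟨0, by ring⟩
  | sq_add a _ ih =>
    obtain ⟨r, rfl⟩ := ih
    obtain ⟨c, hc⟩ := hK a r
    exact ⟨c, by linear_combination hc⟩

section Diagonalizable

variable {m : Type*} [Fintype m] [DecidableEq m] {A : Matrix m m K}

lemma isDiagonalizable_of_mul_eq_mul_diagonal {P : Matrix m m K} {d : m → K} (hP : IsUnit P)
    (h : A * P = P * diagonal d) : IsDiagonalizable A := by
  have hdet : IsUnit P.det := (isUnit_iff_isUnit_det P).mp hP
  refine ⟨P, hP, ?_⟩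
  rw [Matrix.mul_assoc, h, nonsing_inv_mul_cancel_left P _ hdet]
  exact isDiag_diagonal d

lemma IsDiagonalizable.exists_sq_eq_of_mul_self_eq_smul_one (hA : IsDiagonalizable A) {c : K}
    (h : A * A = c • 1) :
    ∃ (P : Matrix m m K) (d : m → K), IsUnit P ∧ A = P * diagonal d * P⁻¹ ∧ ∀ i, d i ^ 2 = c := by
  obtain ⟨P, hP, hD⟩ := hA
  have hdet : IsUnit P.det := (isUnit_iff_isUnit_det P).mp hP
  set D := P⁻¹ * A * P with hD_def
  have hA_eq : A = P * D * P⁻¹ := by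
    simp only [hD_def, Matrix.mul_assoc, mul_nonsing_inv P hdet, Matrix.mul_one,
      mul_nonsing_inv_cancel_left P _ hdet]
  have hDD : D * D = c • 1 := by
    calc D * D = P⁻¹ * (A * A) * P := by
          simp only [hD_def, Matrix.mul_assoc, mul_nonsing_inv_cancel_left P _ hdet]
      _ = c • 1 := by
          rw [h, Matrix.mul_smul, Matrix.mul_one, Matrix.smul_mul, nonsing_inv_mul P hdet]
  refine ⟨P, D.diag, hP, by rw [hD.diagonal_diag]; exact hA_eq, fun i => ?_⟩
  have hii := congrFun (congrFun hDD i) i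
  rw [← hD.diagonal_diag, diagonal_mul_diagonal, diagonal_apply_eq] at hii
  simpa [sq] using hii

lemma IsDiagonalizable.isSquare_of_mul_self_eq_smul_one [Nonempty m] (hA : IsDiagonalizable A)
    {c : K} (h : A * A = c • 1) : IsSquare c := by
  obtain ⟨-, d, -, -, hd⟩ := hA.exists_sq_eq_of_mul_self_eq_smul_one h
  obtain ⟨i⟩ := ‹Nonempty m›
  exact ⟨d i, by rw [← hd i, sq]⟩

lemma IsDiagonalizable.eq_zero_of_mul_self_eq_zero (hA : IsDiagonalizable A) (h : A * A = 0) :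
    A = 0 := by
  obtain ⟨P, d, -, rfl, hd⟩ :=
    hA.exists_sq_eq_of_mul_self_eq_smul_one (c := 0) (by rw [h, zero_smul])
  have hd0 : d = fun _ => 0 := funext fun i => pow_eq_zero_iff two_ne_zero |>.mp (hd i)
  rw [hd0, diagonal_zero, Matrix.mul_zero, Matrix.zero_mul]

end Diagonalizable

lemma isSymm_fin_two_of {α : Type*} (a b d : α) : !![a, b; b, d].IsSymm := by
  ext i j
  fin_cases i <;> fin_cases j <;> rfl

lemma mul_self_fin_two_traceless_symm {R : Type*} [CommRing R] (a b : R) :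
    !![a, b; b, -a] * !![a, b; b, -a] = (a ^ 2 + b ^ 2) • (1 : Matrix (Fin 2) (Fin 2) R) := by
  ext i j
  fin_cases i <;> fin_cases j <;> simp [mul_apply, Fin.sum_univ_two, one_apply] <;> ring

lemma isDiagonalizable_fin_two_of_roots {a b d l₁ l₂ : K} (hb : b ≠ 0) (hl : l₁ ≠ l₂)
    (h₁ : l₁ ^ 2 - (a + d) * l₁ + (a * d - b ^ 2) = 0)
    (h₂ : l₂ ^ 2 - (a + d) * l₂ + (a * d - b ^ 2) = 0) :
    IsDiagonalizable !![a, b; b, d] := by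
  refine isDiagonalizable_of_mul_eq_mul_diagonal (P := !![b, b; l₁ - a, l₂ - a])
    (d := ![l₁, l₂]) ?_ ?_
  · rw [isUnit_iff_isUnit_det, det_fin_two_of, isUnit_iff_ne_zero]
    have : b * (l₂ - a) - b * (l₁ - a) = b * (l₂ - l₁) := by ring
    rw [this]
    exact mul_ne_zero hb (sub_ne_zero.mpr hl.symm)
  · ext i j
    fin_cases i <;> fin_cases j <;> simp [mul_apply, Fin.sum_univ_two] <;>
      first | ring1 | linear_combination -h₁ | linear_combination -h₂

lemma isDiagonalizable_fin_two_of_sq_add_sq_eq_sq {a b d e : K} (h2 : (2 : K) ≠ 0)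
    (hb : b ≠ 0) (he : e ≠ 0) (h : (a - d) ^ 2 + (2 * b) ^ 2 = e ^ 2) :
    IsDiagonalizable !![a, b; b, d] := by
  refine isDiagonalizable_fin_two_of_roots (l₁ := (a + d + e) / 2) (l₂ := (a + d - e) / 2)
    hb ?_ ?_ ?_
  · intro hl
    apply he
    field_simp at hl
    have h2e : 2 * e = 0 := by linear_combination hl
    exact (mul_eq_zero.mp h2e).resolve_left h2
  · field_simp
    linear_combination -h
  · field_simp
    linear_combination -h

lemma Pythagorean.of_forall_isDiagonalizable
    (H : ∀ A : Matrix (Fin 2) (Fin 2) K, A.IsSymm → IsDiagonalizable A) : Pythagorean K := by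
  intro a b
  obtain ⟨c, hc⟩ := (H _ (isSymm_fin_two_of a b (-a))).isSquare_of_mul_self_eq_smul_one
    (mul_self_fin_two_traceless_symm a b)
  exact ⟨c, by rw [hc, sq]⟩

lemma FormallyReal.of_forall_isDiagonalizable
    (H : ∀ A : Matrix (Fin 2) (Fin 2) K, A.IsSymm → IsDiagonalizable A) : FormallyReal K := by
  intro hs
  obtain ⟨c, hc⟩ := (Pythagorean.of_forall_isDiagonalizable H).isSquare_of_isSumSq hs
  have hzero : !![1, c; c, -1] * !![1, c; c, -1] = (0 : Matrix (Fin 2) (Fin 2) K) := by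
    rw [mul_self_fin_two_traceless_symm, one_pow, sq, ← hc, add_neg_cancel, zero_smul]
  have hA := (H _ (isSymm_fin_two_of 1 c (-1))).eq_zero_of_mul_self_eq_zero hzero
  exact one_ne_zero (congrFun (congrFun hA 0) 0 : (1 : K) = 0)

lemma FormallyReal.isDiagonalizable_of_isSymm (hK : FormallyReal K) (hP : Pythagorean K)
    {A : Matrix (Fin 2) (Fin 2) K} (hA : A.IsSymm) : IsDiagonalizable A := by
  rw [eta_fin_two A, hA.apply 0 1]
  by_cases hb : A 0 1 = 0
  · exact isDiagonalizable_of_mul_eq_mul_diagonal (P := 1) (d := ![A 0 0, A 1 1]) isUnit_one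
      (by ext i j; fin_cases i <;> fin_cases j <;> simp [hb])
  · obtain ⟨e, he⟩ := hP (A 0 0 - A 1 1) (2 * A 0 1)
    have h2 := hK.two_ne_zero
    refine isDiagonalizable_fin_two_of_sq_add_sq_eq_sq h2 hb ?_ he
    rintro rfl
    exact mul_ne_zero h2 hb (hK.eq_zero_of_sq_add_sq_eq_zero (x := A 0 0 - A 1 1)
      (by linear_combination he))

end

theorem stmt5 {K : Type*} [Field K] :
    (∀ A : Matrix (Fin 2) (Fin 2) K, A.IsSymm → IsDiagonalizable A) ↔
      (FormallyReal K ∧ Pythagorean K) :=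
  ⟨fun H => ⟨.of_forall_isDiagonalizable H, .of_forall_isDiagonalizable H⟩,
    fun ⟨hK, hP⟩ _ hA => hK.isDiagonalizable_of_isSymm hP hA⟩
end

section
/- Assume every symmetric n×n matrix over K is diagonalizable over K. Then every nonsingular P ∈ GL_n(K) admits a decomposition P = O·D·U with O, U orthogonal matrices (OᵀO = I_n, UᵀU = I_n) and D diagonal. -/
open Matrix
/-!
The hypothesis, tested on the symmetric matrix `a (E_ii - E_jj) + b (E_ij + E_ji)` whose square is
`a² + b²` times a projection, shows that `K` is Pythagorean (an eigenvalue squares to `a² + b²`) and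
formally real (a diagonalizable matrix with zero square vanishes); this needs `n ≥ 2`, and for
`n ≤ 1` every matrix is diagonal. Over such a field nonzero vectors can be normalised, and the
orthogonal complement of finitely many eigenvectors of a symmetric diagonalizable matrix is
invariant, hence contains another eigenvector. This yields an orthogonal `Q` with
`Qᵀ (Pᵀ P) Q` diagonal, so the columns of `P Q` are pairwise orthogonal with squared lengths
`e i ^ 2 ≠ 0`, and `P = (P Q (diagonal e)⁻¹) * diagonal e * Qᵀ`.
-/

section

variable {K : Type*} [Field K] {m : Type*}

theorem Pythagorean.exists_eq_sq_of_isSumSq (hK : Pythagorean K) {s : K} (hs : IsSumSq s) :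
    ∃ c, s = c ^ 2 := by
  induction hs with
  | zero => exact ⟨0, by ring⟩
  | sq_add a _ ih =>
    obtain ⟨c, rfl⟩ := ih
    obtain ⟨d, hd⟩ := hK a c
    exact ⟨d, by rw [← hd]; ring⟩

theorem Pythagorean.isFormallyReal (hK : Pythagorean K)
    (h : ∀ a b : K, a ^ 2 + b ^ 2 = 0 → a = 0) : IsFormallyReal K :=
  .of_eq_zero_of_eq_zero_of_mul_self_add fun {s a} hs hsa => by
    obtain ⟨c, rfl⟩ := hK.exists_eq_sq_of_isSumSq hs
    exact h a c (by rw [← hsa]; ring)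

def reflectionMatrix [DecidableEq m] (i j : m) (a b : K) : Matrix m m K :=
  a • (single i i 1 - single j j 1) + b • (single i j 1 + single j i 1)

theorem reflectionMatrix_isSymm [DecidableEq m] (i j : m) (a b : K) :
    (reflectionMatrix i j a b).IsSymm := by
  simp [reflectionMatrix, IsSymm, transpose_add, transpose_smul, transpose_sub, add_comm]

variable [Fintype m] [DecidableEq m]

theorem reflectionMatrix_mul_self {i j : m} (hij : i ≠ j) (a b : K) :
    reflectionMatrix i j a b * reflectionMatrix i j a b =
      (a ^ 2 + b ^ 2) • (single i i 1 + single j j 1) := by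
  simp only [reflectionMatrix, add_mul, mul_add, sub_mul, mul_sub, Matrix.smul_mul,
    Matrix.mul_smul, single_mul_single_same, single_mul_single_of_ne, ne_eq, hij,
    hij.symm, not_false_eq_true, one_mul, add_zero, zero_add, sub_zero]
  module

theorem dotProduct_self_eq_zero_iff_of_isFormallyReal [IsFormallyReal K] {v : m → K} :
    v ⬝ᵥ v = 0 ↔ v = 0 := by
  refine ⟨fun h => funext fun i => ?_, fun h => by simp [h]⟩
  have hsplit : v i * v i + ∑ j ∈ Finset.univ.erase i, v j * v j = 0 := by
    rwa [Finset.add_sum_erase _ (fun j => v j * v j) (Finset.mem_univ i)]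
  exact mul_self_eq_zero.mp (IsFormallyReal.eq_zero_of_add_right (.mul_self _)
    (.sum_mul_self _ _) hsplit)

theorem Pythagorean.exists_smul_dotProduct_self_eq_one (hK : Pythagorean K) [IsFormallyReal K]
    {w : m → K} (hw : w ≠ 0) : ∃ c : K, (c • w) ⬝ᵥ (c • w) = 1 := by
  obtain ⟨d, hd⟩ := hK.exists_eq_sq_of_isSumSq (IsSumSq.sum_mul_self Finset.univ w)
  have hd0 : d ≠ 0 := by
    rintro rfl
    exact hw (dotProduct_self_eq_zero_iff_of_isFormallyReal.mp (by simpa [dotProduct] using hd))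
  refine ⟨d⁻¹, ?_⟩
  rw [smul_dotProduct, dotProduct_smul, show w ⬝ᵥ w = d ^ 2 from hd, smul_eq_mul, smul_eq_mul]
  field_simp

namespace IsDiagonalizable

variable {A : Matrix m m K}

theorem iSup_eigenspace_eq_top (hA : IsDiagonalizable A) :
    ⨆ μ, Module.End.eigenspace (toLin' A) μ = ⊤ := by
  obtain ⟨Q, hQ, hD⟩ := hA
  have hQ' : IsUnit Q.det := (isUnit_iff_isUnit_det Q).mp hQ
  have hAQ : A * Q = Q * diagonal (Q⁻¹ * A * Q).diag := by
    rw [hD.diagonal_diag, ← Matrix.mul_assoc, ← Matrix.mul_assoc, mul_nonsing_inv _ hQ',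
      Matrix.one_mul]
  have hcol : ∀ j, Q.col j ∈ Module.End.eigenspace (toLin' A) ((Q⁻¹ * A * Q) j j) := by
    intro j
    rw [Module.End.mem_eigenspace_iff, toLin'_apply]
    funext i
    have := congrFun (congrFun hAQ i) j
    rw [mul_diagonal] at this
    simpa [mul_apply, mulVec, dotProduct, mul_comm] using this
  rw [eq_top_iff]
  intro v _
  have hv : v = ∑ j, (Q⁻¹ *ᵥ v) j • Q.col j := by
    conv_lhs => rw [← one_mulVec v, ← mul_nonsing_inv _ hQ', ← mulVec_mulVec]
    ext i
    simp [mulVec, dotProduct, Finset.sum_apply, mul_comm]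
  rw [hv]
  exact Submodule.sum_mem _ fun j _ => Submodule.smul_mem _ _
    (Submodule.mem_iSup_of_mem _ (hcol j))

theorem exists_eigenvector_mem (hA : IsDiagonalizable A) {W : Submodule K (m → K)}
    (hW : ∀ v ∈ W, A *ᵥ v ∈ W) (hW0 : W ≠ ⊥) : ∃ v ∈ W, v ≠ 0 ∧ ∃ μ : K, A *ᵥ v = μ • v := by
  have hsplit := Submodule.inf_iSup_genEigenspace (f := toLin' A) hW 1
  simp only [hA.iSup_eigenspace_eq_top, inf_top_eq] at hsplit
  obtain ⟨μ, hμ⟩ : ∃ μ, W ⊓ Module.End.eigenspace (toLin' A) μ ≠ ⊥ := by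
    by_contra! h
    simp only [h, iSup_bot] at hsplit
    exact hW0 hsplit
  obtain ⟨v, ⟨hvW, hvμ⟩, hv0⟩ := Submodule.exists_mem_ne_zero_of_ne_bot hμ
  exact ⟨v, hvW, hv0, μ, Module.End.mem_eigenspace_iff.mp hvμ⟩

theorem exists_eigenvector_apply_ne_zero (hA : IsDiagonalizable A) (i : m) :
    ∃ v : m → K, v i ≠ 0 ∧ ∃ μ : K, A *ᵥ v = μ • v := by
  by_contra! h
  have hle : ⨆ μ, Module.End.eigenspace (toLin' A) μ ≤ LinearMap.ker (LinearMap.proj i) :=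
    iSup_le fun μ v hv => of_not_not fun hvi => h v hvi μ (Module.End.mem_eigenspace_iff.mp hv)
  rw [hA.iSup_eigenspace_eq_top] at hle
  simpa using hle (Submodule.mem_top (x := Pi.single i (1 : K)))

theorem eq_zero_of_mul_self_eq_zero_s13 (hA : IsDiagonalizable A) (h : A * A = 0) : A = 0 := by
  have hle : ⨆ μ, Module.End.eigenspace (toLin' A) μ ≤ LinearMap.ker (toLin' A) := by
    refine iSup_le fun μ v hv => ?_
    rw [Module.End.mem_eigenspace_iff] at hv
    have hsq : (μ * μ) • v = 0 := by
      have : toLin' (A * A) v = 0 := by rw [h, map_zero, LinearMap.zero_apply]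
      rwa [toLin'_mul, LinearMap.comp_apply, hv, map_smul, hv, smul_smul] at this
    rw [LinearMap.mem_ker, hv]
    rcases smul_eq_zero.mp hsq with hμ | hv0
    · rw [mul_self_eq_zero.mp hμ, zero_smul]
    · rw [hv0, smul_zero]
  rw [hA.iSup_eigenspace_eq_top, top_le_iff, LinearMap.ker_eq_top] at hle
  exact toLin'.injective (by rw [hle, map_zero])

theorem exists_eigenvector_orthogonal (hAs : A.IsSymm) (hA : IsDiagonalizable A) {k : ℕ}
    (hk : k < Fintype.card m) (u : Fin k → m → K) (hu : ∀ i, ∃ μ : K, A *ᵥ u i = μ • u i) :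
    ∃ w : m → K, w ≠ 0 ∧ (∀ i, u i ⬝ᵥ w = 0) ∧ ∃ μ : K, A *ᵥ w = μ • w := by
  set W := LinearMap.ker (mulVecLin (of u))
  have hmem : ∀ w, w ∈ W ↔ ∀ i, u i ⬝ᵥ w = 0 := fun w => by
    simp [W, funext_iff, mulVec, of_apply]
  have hW0 : W ≠ ⊥ := LinearMap.ker_ne_bot_of_finrank_lt (by simpa using hk)
  have hAW : ∀ w ∈ W, A *ᵥ w ∈ W := by
    intro w hw
    rw [hmem] at hw ⊢
    intro i
    obtain ⟨μ, hμ⟩ := hu i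
    rw [dotProduct_mulVec, ← mulVec_transpose, hAs.eq, hμ, smul_dotProduct, hw i, smul_zero]
  obtain ⟨w, hwW, hw0, hμ⟩ := hA.exists_eigenvector_mem hAW hW0
  exact ⟨w, hw0, (hmem w).mp hwW, hμ⟩

theorem exists_orthonormal_eigenvectors (hK : Pythagorean K) [IsFormallyReal K]
    (hAs : A.IsSymm) (hA : IsDiagonalizable A) :
    ∀ k ≤ Fintype.card m, ∃ u : Fin k → m → K,
      (∀ i j, u i ⬝ᵥ u j = if i = j then 1 else 0) ∧ ∀ i, ∃ μ : K, A *ᵥ u i = μ • u i := by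
  intro k
  induction k with
  | zero => exact fun _ => ⟨Fin.elim0, fun i => i.elim0, fun i => i.elim0⟩
  | succ k ih =>
    intro hk
    obtain ⟨u, hu, hμ⟩ := ih (by omega)
    obtain ⟨w, hw0, hwu, hwμ⟩ := hA.exists_eigenvector_orthogonal hAs hk u hμ
    obtain ⟨c, hc⟩ := hK.exists_smul_dotProduct_self_eq_one hw0
    have hcwu : ∀ i, u i ⬝ᵥ c • w = 0 := fun i => by rw [dotProduct_smul, hwu i, smul_zero]
    refine ⟨Fin.cons (c • w) u, fun i j => ?_, fun i => ?_⟩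
    · cases i using Fin.cases <;> cases j using Fin.cases <;>
        simp [hc, hu, hcwu, dotProduct_comm (c • w), Fin.succ_ne_zero, (Fin.succ_ne_zero _).symm]
    · cases i using Fin.cases
      · obtain ⟨μ, hμw⟩ := hwμ
        exact ⟨μ, by simp [mulVec_smul, hμw, smul_comm c μ]⟩
      · simpa using hμ _

theorem exists_orthogonal_transpose_mul_mul_eq_diagonal (hK : Pythagorean K)
    [IsFormallyReal K] (hAs : A.IsSymm) (hA : IsDiagonalizable A) :
    ∃ Q : Matrix m m K, Qᵀ * Q = 1 ∧ ∃ d, Qᵀ * A * Q = diagonal d := by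
  obtain ⟨u, hu, hμ⟩ := hA.exists_orthonormal_eigenvectors hK hAs _ le_rfl
  choose μ hμ using hμ
  let e := Fintype.equivFin m
  let Q : Matrix m m K := of fun x y => u (e y) x
  have hQ : Qᵀ * Q = 1 := by
    ext y z
    simpa [Q, mul_apply, one_apply, dotProduct] using hu (e y) (e z)
  have hAQ : A * Q = Q * diagonal (μ ∘ e) := by
    ext x y
    rw [mul_diagonal]
    simpa [Q, mul_apply, mulVec, dotProduct, mul_comm] using congrFun (hμ (e y)) x
  exact ⟨Q, hQ, μ ∘ e, by rw [Matrix.mul_assoc, hAQ, ← Matrix.mul_assoc, hQ, Matrix.one_mul]⟩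

end IsDiagonalizable

theorem pythagorean_of_forall_isDiagonalizable {i j : m} (hij : i ≠ j)
    (h : ∀ A : Matrix m m K, A.IsSymm → IsDiagonalizable A) : Pythagorean K := by
  intro a b
  obtain ⟨v, hvi, μ, hv⟩ :=
    (h _ (reflectionMatrix_isSymm i j a b)).exists_eigenvector_apply_ne_zero i
  refine ⟨μ, mul_right_cancel₀ hvi ?_⟩
  have := congrFun (congrArg (· *ᵥ v) (reflectionMatrix_mul_self hij a b)) i
  simpa [← mulVec_mulVec, hv, mulVec_smul, add_mulVec, single_mulVec, hij, sq, mul_assoc,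
    eq_comm] using this

theorem isFormallyReal_of_forall_isDiagonalizable {i j : m} (hij : i ≠ j)
    (h : ∀ A : Matrix m m K, A.IsSymm → IsDiagonalizable A) : IsFormallyReal K :=
  (pythagorean_of_forall_isDiagonalizable hij h).isFormallyReal fun a b hab => by
    have := (h _ (reflectionMatrix_isSymm i j a b)).eq_zero_of_mul_self_eq_zero_s13
      (by rw [reflectionMatrix_mul_self hij, hab, zero_smul])
    simpa [reflectionMatrix, single_apply, hij, hij.symm] using congrFun (congrFun this i) i

theorem Pythagorean.exists_orthogonal_mul_diagonal (hK : Pythagorean K) [IsFormallyReal K]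
    {B : Matrix m m K} (hB : IsUnit B) (hBB : (Bᵀ * B).IsDiag) :
    ∃ O : Matrix m m K, Oᵀ * O = 1 ∧ ∃ e, B = O * diagonal e := by
  have hsq : ∀ i, ∃ c : K, c ≠ 0 ∧ (Bᵀ * B) i i = c ^ 2 := by
    intro i
    have hdot : (Bᵀ * B) i i = B.col i ⬝ᵥ B.col i := by simp [mul_apply, dotProduct]
    obtain ⟨c, hc⟩ := hK.exists_eq_sq_of_isSumSq (IsSumSq.sum_mul_self Finset.univ (B.col i))
    refine ⟨c, ?_, by rw [hdot]; exact hc⟩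
    rintro rfl
    have hcol : B *ᵥ Pi.single i 1 = B *ᵥ 0 := by
      rw [mulVec_single_one, mulVec_zero, ← dotProduct_self_eq_zero_iff_of_isFormallyReal]
      simpa [dotProduct] using hc
    simpa using mulVec_injective_iff_isUnit.mpr hB hcol
  choose e he0 he using hsq
  have hBBe : Bᵀ * B = diagonal fun i => e i ^ 2 := by
    rw [← hBB.diagonal_diag]
    exact congrArg diagonal (funext he)
  refine ⟨B * diagonal e⁻¹, ?_, e, ?_⟩
  · rw [transpose_mul, diagonal_transpose, Matrix.mul_assoc, ← Matrix.mul_assoc Bᵀ, hBBe,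
      diagonal_mul_diagonal, diagonal_mul_diagonal, ← diagonal_one]
    exact congrArg diagonal (funext fun i => by simp only [Pi.inv_apply]; field_simp [he0 i])
  · have hinv : diagonal (fun i => e⁻¹ i * e i) = 1 := by
      rw [← diagonal_one]
      exact congrArg diagonal (funext fun i => inv_mul_cancel₀ (he0 i))
    rw [Matrix.mul_assoc, diagonal_mul_diagonal, hinv, Matrix.mul_one]

theorem Pythagorean.exists_svd (hK : Pythagorean K) [IsFormallyReal K]
    {P : Matrix m m K} (hP : IsUnit P) (hPP : IsDiagonalizable (Pᵀ * P)) :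
    ∃ O D U : Matrix m m K, Oᵀ * O = 1 ∧ Uᵀ * U = 1 ∧ D.IsDiag ∧ P = O * D * U := by
  obtain ⟨Q, hQ, d, hd⟩ :=
    hPP.exists_orthogonal_transpose_mul_mul_eq_diagonal hK (isSymm_transpose_mul_self P)
  have hQ' : Q * Qᵀ = 1 := mul_eq_one_comm.mp hQ
  have hPQ : (P * Q)ᵀ * (P * Q) = diagonal d := by
    rw [transpose_mul, Matrix.mul_assoc, ← Matrix.mul_assoc Pᵀ, ← Matrix.mul_assoc, hd]
  obtain ⟨O, hO, e, he⟩ := hK.exists_orthogonal_mul_diagonal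
    (hP.mul (IsUnit.of_mul_eq_one _ hQ')) (hPQ ▸ isDiag_diagonal d)
  refine ⟨O, diagonal e, Qᵀ, hO, by rwa [transpose_transpose], isDiag_diagonal e, ?_⟩
  rw [← he, Matrix.mul_assoc, hQ', Matrix.mul_one]

end

theorem stmt13 {K : Type*} [Field K] {n : ℕ}
    (hsymm : ∀ A : Matrix (Fin n) (Fin n) K, A.IsSymm → IsDiagonalizable A)
    (P : Matrix (Fin n) (Fin n) K) (hP : IsUnit P) :
    ∃ (O D U : Matrix (Fin n) (Fin n) K),
      Oᵀ * O = 1 ∧ Uᵀ * U = 1 ∧ D.IsDiag ∧ P = O * D * U := by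
  rcases Nat.lt_or_ge n 2 with hn | hn
  · exact ⟨1, P, 1, by simp, by simp, fun i j hij => (hij (Fin.ext (by omega))).elim, by simp⟩
  · have h01 : (⟨0, by omega⟩ : Fin n) ≠ ⟨1, by omega⟩ := by simp
    have : IsFormallyReal K := isFormallyReal_of_forall_isDiagonalizable h01 hsymm
    exact (pythagorean_of_forall_isDiagonalizable h01 hsymm).exists_svd hP
      (hsymm _ (isSymm_transpose_mul_self P))
end

section
/- Assume every symmetric n×n matrix over K is diagonalizable over K, and let P ∈ GL_n(K). Then every eigenvalue of PᵀP in K is a nonzero square in K. -/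
open Matrix
-- diag matrix with D*D = 0 is zero
lemma diag_sq_zero {K : Type*} [Field K] {n : ℕ} {D : Matrix (Fin n) (Fin n) K}
    (hd : D.IsDiag) (h : D * D = 0) : D = 0 := by
  ext i j
  rcases eq_or_ne i j with rfl | hij
  · have h2 : (D * D) i i = D i i * D i i := by
      rw [Matrix.mul_apply]
      rw [Finset.sum_eq_single i]
      · intro b _ hb
        rw [hd (Ne.symm hb), zero_mul]
      · simp
    rw [h] at h2
    have := (mul_self_eq_zero).mp h2.symm
    simpa using this
  · simpa using hd hij

lemma sumSq_ne_zero {K : Type*} [Field K] {n : ℕ}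
    (hsymm : ∀ A : Matrix (Fin n) (Fin n) K, A.IsSymm → IsDiagonalizable A)
    (X : Fin n → K) (hX : X ≠ 0) : ∑ i, X i * X i ≠ 0 := by
  intro hsum
  set A : Matrix (Fin n) (Fin n) K := Matrix.of (fun i j => X i * X j) with hA
  have hAs : A.IsSymm := by
    ext i j; simp [hA, Matrix.transpose_apply, mul_comm]
  obtain ⟨Q, hQ, hdiag⟩ := hsymm A hAs
  have hdet : IsUnit Q.det := (Matrix.isUnit_iff_isUnit_det Q).mp hQ
  have hAA : A * A = 0 := by
    ext i j
    rw [Matrix.mul_apply]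
    have : ∀ k, A i k * A k j = (X k * X k) * (X i * X j) := by
      intro k; simp [hA]; ring
    simp_rw [this, ← Finset.sum_mul, hsum]
    simp
  have hDD : (Q⁻¹ * A * Q) * (Q⁻¹ * A * Q) = 0 := by
    have : Q * Q⁻¹ = 1 := Matrix.mul_nonsing_inv Q hdet
    calc (Q⁻¹ * A * Q) * (Q⁻¹ * A * Q) = Q⁻¹ * (A * (Q * Q⁻¹) * A) * Q := by
          noncomm_ring
      _ = 0 := by rw [this]; simp [hAA]
  have hD0 : Q⁻¹ * A * Q = 0 := diag_sq_zero hdiag hDD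
  have hA0 : A = 0 := by
    have h1 : Q * (Q⁻¹ * A * Q) * Q⁻¹ = A := by
      rw [show Q * (Q⁻¹ * A * Q) * Q⁻¹ = (Q * Q⁻¹) * A * (Q * Q⁻¹) by noncomm_ring,
        Matrix.mul_nonsing_inv Q hdet]
      simp
    rw [hD0] at h1; simpa using h1.symm
  obtain ⟨i, hi⟩ := Function.ne_iff.mp hX
  have : A i i = 0 := by rw [hA0]; simp
  rw [hA] at this
  simp at this
  exact hi (by simpa using this)


lemma diag_mul_apply {K : Type*} [Field K] {n : ℕ} {D M : Matrix (Fin n) (Fin n) K}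
    (hd : D.IsDiag) (i j : Fin n) : (D * M) i j = D i i * M i j := by
  rw [Matrix.mul_apply, Finset.sum_eq_single i]
  · intro b _ hb; rw [hd (Ne.symm hb), zero_mul]
  · simp

lemma pyth_of_hsymm {K : Type*} [Field K] {n : ℕ}
    (hsymm : ∀ A : Matrix (Fin n) (Fin n) K, A.IsSymm → IsDiagonalizable A)
    (hn : 2 ≤ n) (a b : K) : ∃ c : K, a ^ 2 + b ^ 2 = c ^ 2 := by
  rcases eq_or_ne (a ^ 2 + b ^ 2) 0 with hs | hs
  · exact ⟨0, by simpa using hs⟩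
  obtain ⟨m, rfl⟩ := Nat.exists_eq_add_of_le hn
  set s := a ^ 2 + b ^ 2 with hsdef
  set e : Fin 2 ⊕ Fin m ≃ Fin (2 + m) := finSumFinEquiv with he
  set B : Matrix (Fin 2) (Fin 2) K := !![a, b; b, -a] with hB
  set A : Matrix (Fin (2+m)) (Fin (2+m)) K :=
    Matrix.reindex e e (Matrix.fromBlocks B 0 0 0) with hA
  have hBs : Bᵀ = B := by
    ext i j; fin_cases i <;> fin_cases j <;> simp [hB]
  have hAs : A.IsSymm := by
    unfold Matrix.IsSymm
    rw [hA, Matrix.transpose_reindex, Matrix.fromBlocks_transpose, hBs]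
    simp
  have hBB : B * B = s • (1 : Matrix (Fin 2) (Fin 2) K) := by
    ext i j; fin_cases i <;> fin_cases j <;>
      simp [hB, Matrix.mul_apply, Fin.sum_univ_two, hsdef] <;> ring
  have hmul : ∀ M N : Matrix (Fin 2) (Fin 2) K,
      (Matrix.reindex e e (Matrix.fromBlocks M 0 0 0)) *
      (Matrix.reindex e e (Matrix.fromBlocks N 0 0 0)) =
      Matrix.reindex e e (Matrix.fromBlocks (M * N) 0 0 0) := by
    intro M N
    simp only [Matrix.reindex_apply, Matrix.submatrix_mul_equiv, Matrix.fromBlocks_multiply]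
    simp
  have hA3 : A * A * A = s • A := by
    rw [hA, hmul, hmul, hBB]
    have : (s • (1 : Matrix (Fin 2) (Fin 2) K)) * B = s • B := by simp
    rw [this]
    have h2 : Matrix.fromBlocks (s • B) (0 : Matrix (Fin 2) (Fin m) K)
        (0 : Matrix (Fin m) (Fin 2) K) (0 : Matrix (Fin m) (Fin m) K)
        = s • Matrix.fromBlocks B 0 0 0 := by
      ext i j; cases i <;> cases j <;> simp
    rw [Matrix.reindex_apply, Matrix.reindex_apply, h2]; rfl
  obtain ⟨Q, hQ, hdiag⟩ := hsymm A hAs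
  have hdet : IsUnit Q.det := (Matrix.isUnit_iff_isUnit_det Q).mp hQ
  have hQQ : Q * Q⁻¹ = 1 := Matrix.mul_nonsing_inv Q hdet
  set D := Q⁻¹ * A * Q with hD
  have hD3 : D * D * D = s • D := by
    calc D * D * D = Q⁻¹ * (A * (Q * Q⁻¹) * A * (Q * Q⁻¹) * A) * Q := by
          rw [hD]; noncomm_ring
      _ = Q⁻¹ * (A * A * A) * Q := by rw [hQQ]; noncomm_ring
      _ = s • D := by rw [hA3, hD]; simp [Matrix.mul_smul, Matrix.smul_mul]
  have hDne : D ≠ 0 := by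
    intro h0
    have hA0 : A = 0 := by
      have h1 : Q * D * Q⁻¹ = A := by
        rw [hD, show Q * (Q⁻¹ * A * Q) * Q⁻¹ = (Q * Q⁻¹) * A * (Q * Q⁻¹) by noncomm_ring,
          hQQ]
        simp
      rw [h0] at h1; simpa using h1.symm
    have hb : A (e (Sum.inl 0)) (e (Sum.inl 0)) = a := by
      rw [hA, Matrix.reindex_apply, Matrix.submatrix_apply]
      simp [hB]
    have hb2 : A (e (Sum.inl 0)) (e (Sum.inl 1)) = b := by
      rw [hA, Matrix.reindex_apply, Matrix.submatrix_apply]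
      simp [hB]
    rw [hA0] at hb hb2
    simp at hb hb2
    rw [hsdef, ← hb, ← hb2] at hs
    simp at hs
  obtain ⟨i, hi⟩ : ∃ i, D i i ≠ 0 := by
    by_contra hall
    push_neg at hall
    apply hDne
    ext i j
    rcases eq_or_ne i j with rfl | hij
    · simpa using hall i
    · simpa using hdiag hij
  have key : D i i * D i i * D i i = s * D i i := by
    have h1 : (D * D * D) i i = D i i * (D i i * D i i) := by
      rw [mul_assoc, diag_mul_apply hdiag, diag_mul_apply hdiag]
    have h2 : (s • D) i i = s * D i i := by simp
    rw [hD3, h2] at h1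
    rw [h1]; ring
  exact ⟨D i i, by
    have := mul_right_cancel₀ hi key
    rw [hsdef] at this ⊢
    rw [← this]; ring⟩

lemma sum_sq_is_sq_aux {K : Type*} [Field K]
    (hp : ∀ a b : K, ∃ c : K, a ^ 2 + b ^ 2 = c ^ 2)
    {ι : Type*} (X : ι → K) (s : Finset ι) :
    ∃ c : K, ∑ i ∈ s, X i * X i = c ^ 2 := by
  induction s using Finset.cons_induction with
  | empty => exact ⟨0, by simp⟩
  | cons a s ha ih =>
    obtain ⟨c, hc⟩ := ih
    obtain ⟨d, hd⟩ := hp (X a) c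
    exact ⟨d, by rw [Finset.sum_cons, hc, ← hd]; ring⟩

lemma sum_sq_is_sq {K : Type*} [Field K] {n : ℕ}
    (hsymm : ∀ A : Matrix (Fin n) (Fin n) K, A.IsSymm → IsDiagonalizable A)
    (X : Fin n → K) : ∃ c : K, ∑ i, X i * X i = c ^ 2 := by
  rcases lt_or_ge n 2 with h | h
  · interval_cases n
    · exact ⟨0, by simp⟩
    · exact ⟨X 0, by rw [Fin.sum_univ_one]; ring⟩
  · exact sum_sq_is_sq_aux (pyth_of_hsymm hsymm h) X Finset.univ

theorem stmt14 {K : Type*} [Field K] {n : ℕ}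
    (hsymm : ∀ A : Matrix (Fin n) (Fin n) K, A.IsSymm → IsDiagonalizable A)
    (P : Matrix (Fin n) (Fin n) K) (hP : IsUnit P)
    (lam : K) (hlam : Module.End.HasEigenvalue (Matrix.toLin' (Pᵀ * P)) lam) :
    ∃ c : K, c ≠ 0 ∧ lam = c ^ 2 := by
  obtain ⟨v, hv⟩ := hlam.exists_hasEigenvector
  have hv0 : v ≠ 0 := hv.2
  have hdet : IsUnit P.det := (Matrix.isUnit_iff_isUnit_det P).mp hP
  have happ : (Pᵀ * P) *ᵥ v = lam • v := by
    have := hv.apply_eq_smul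
    rwa [Matrix.toLin'_apply] at this
  set w := P *ᵥ v with hw
  have h1 : v ⬝ᵥ ((Pᵀ * P) *ᵥ v) = w ⬝ᵥ w := by
    rw [← Matrix.mulVec_mulVec, Matrix.dotProduct_mulVec, Matrix.vecMul_transpose]
  have h2 : v ⬝ᵥ ((Pᵀ * P) *ᵥ v) = lam * (v ⬝ᵥ v) := by
    rw [happ, dotProduct_smul, smul_eq_mul]
  have hwv : w ⬝ᵥ w = lam * (v ⬝ᵥ v) := by rw [← h1, h2]
  have hw0 : w ≠ 0 := by
    intro h0
    apply hv0
    have hvv : P⁻¹ *ᵥ w = v := by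
      rw [hw, Matrix.mulVec_mulVec, Matrix.nonsing_inv_mul P hdet, Matrix.one_mulVec]
    rw [h0] at hvv
    rw [← hvv]
    simp
  obtain ⟨c, hc⟩ := sum_sq_is_sq hsymm v
  obtain ⟨d, hd⟩ := sum_sq_is_sq hsymm w
  have hcdot : v ⬝ᵥ v = c ^ 2 := hc
  have hddot : w ⬝ᵥ w = d ^ 2 := hd
  have hc0 : c ≠ 0 := by
    intro h
    exact sumSq_ne_zero hsymm v hv0 (by rw [hc, h]; ring)
  have hd0 : d ≠ 0 := by
    intro h
    exact sumSq_ne_zero hsymm w hw0 (by rw [hd, h]; ring)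
  refine ⟨d / c, div_ne_zero hd0 hc0, ?_⟩
  rw [div_pow, eq_div_iff (pow_ne_zero 2 hc0)]
  rw [← hcdot, ← hddot, hwv]
end

section
/- Assume every symmetric n×n matrix over K is diagonalizable, n ≥ 2. If V and W are two diagonalizable linear subspaces of Mat_n(K), each of dimension n(n+1)/2, then dim(V ∩ W) ≥ n. -/
open Matrix
theorem stmt15 {K : Type*} [Field K] {n : ℕ} (hn : 2 ≤ n)
    (hsymm : ∀ A : Matrix (Fin n) (Fin n) K, A.IsSymm → IsDiagonalizable A)
    (V W : Submodule K (Matrix (Fin n) (Fin n) K))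
    (hV : ∀ A ∈ V, IsDiagonalizable A) (hW : ∀ A ∈ W, IsDiagonalizable A)
    (hdV : Module.finrank K V = n * (n + 1) / 2)
    (hdW : Module.finrank K W = n * (n + 1) / 2) :
    n ≤ Module.finrank K ↥(V ⊓ W) := by
  have h := Submodule.finrank_sup_add_finrank_inf_eq V W
  have h2 : Module.finrank K ↥(V ⊔ W) ≤ n * n := by
    have h3 := Submodule.finrank_le (V ⊔ W)
    simpa [Module.finrank_matrix, Fintype.card_fin] using h3
  rw [hdV, hdW] at h
  have hev : 2 ∣ n * (n + 1) := (Nat.even_mul_succ_self n).two_dvd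
  have h4 : n * (n + 1) = n * n + n := by ring
  omega
end

section
/- Over K = ℝ, the 2-dimensional subspace V of Mat_3(ℝ) spanned by A = Diag(0, 1, −1) and B = [[0,1,0],[0,0,1],[0,1,0]] consists of diagonalizable matrices (every nonzero a·A + b·B has the three distinct eigenvalues 0, √(a²+b²), −√(a²+b²)), yet V is not conjugate to any subspace of the symmetric matrices S_3(ℝ). -/
open Matrix
private lemma eig_aux (a b lam : ℝ) (hl2 : lam ^ 2 = a ^ 2 + b ^ 2) :
    Module.End.HasEigenvalue
      (Matrix.toLin' (!![0,b,0;0,a,b;0,b,-a] : Matrix (Fin 3) (Fin 3) ℝ)) lam := by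
  by_cases hb : b = 0
  · subst hb
    have h0 : (lam - a) * (lam + a) = 0 := by linear_combination hl2
    rcases mul_eq_zero.mp h0 with h | h
    · have hla : lam = a := by linarith
      apply Module.End.hasEigenvalue_of_hasEigenvector (x := ![0, 1, 0])
      constructor
      · rw [Module.End.mem_eigenspace_iff, Matrix.toLin'_apply]
        funext i
        fin_cases i <;>
          simp [Matrix.mulVec, dotProduct, Fin.sum_univ_three, hla]
      · intro h'
        have := congrFun h' 1
        simp at this
    · have hla : lam = -a := by linarith
      apply Module.End.hasEigenvalue_of_hasEigenvector (x := ![0, 0, 1])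
      constructor
      · rw [Module.End.mem_eigenspace_iff, Matrix.toLin'_apply]
        funext i
        fin_cases i <;>
          simp [Matrix.mulVec, dotProduct, Fin.sum_univ_three, hla]
      · intro h'
        have := congrFun h' 2
        simp at this
  · apply Module.End.hasEigenvalue_of_hasEigenvector (x := ![b^2, lam*b, lam^2 - lam*a])
    constructor
    · rw [Module.End.mem_eigenspace_iff, Matrix.toLin'_apply]
      funext i
      fin_cases i
      · simp [Matrix.mulVec, dotProduct, Fin.sum_univ_three]; ring
      · simp [Matrix.mulVec, dotProduct, Fin.sum_univ_three]; ring
      · simp [Matrix.mulVec, dotProduct, Fin.sum_univ_three]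
        linear_combination (-lam) * hl2
    · intro h'
      have := congrFun h' 0
      simp at this
      exact hb this

private lemma combo_eq (a b : ℝ) :
    a • (!![0, 0, 0; 0, 1, 0; 0, 0, -1] : Matrix (Fin 3) (Fin 3) ℝ)
      + b • !![0, 1, 0; 0, 0, 1; 0, 1, 0] = !![0,b,0;0,a,b;0,b,-a] := by
  ext i j
  fin_cases i <;> fin_cases j <;>
    simp [Matrix.add_apply, Matrix.smul_apply, Matrix.vecHead, Matrix.vecTail]

set_option maxHeartbeats 1600000 in
theorem stmt19
    (A B : Matrix (Fin 3) (Fin 3) ℝ)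
    (hA : A = !![0, 0, 0; 0, 1, 0; 0, 0, -1])
    (hB : B = !![0, 1, 0; 0, 0, 1; 0, 1, 0])
    (V : Submodule ℝ (Matrix (Fin 3) (Fin 3) ℝ))
    (hV : V = Submodule.span ℝ {A, B}) :
    (∀ a b : ℝ, ¬ (a = 0 ∧ b = 0) →
        (Module.End.HasEigenvalue (Matrix.toLin' (a • A + b • B)) 0 ∧
         Module.End.HasEigenvalue (Matrix.toLin' (a • A + b • B)) (Real.sqrt (a ^ 2 + b ^ 2)) ∧
         Module.End.HasEigenvalue (Matrix.toLin' (a • A + b • B)) (-Real.sqrt (a ^ 2 + b ^ 2)) ∧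
         Real.sqrt (a ^ 2 + b ^ 2) ≠ 0)) ∧
      (∀ M ∈ V, IsDiagonalizable M) ∧
      ¬ ∃ P : Matrix (Fin 3) (Fin 3) ℝ, IsUnit P ∧ ∀ M ∈ V, (P * M * P⁻¹).IsSymm := by
  have hAB : ∀ a b : ℝ, a • A + b • B = !![0,b,0;0,a,b;0,b,-a] := by
    intro a b; rw [hA, hB]; exact combo_eq a b
  refine ⟨?_, ?_, ?_⟩
  · -- eigenvalues
    intro a b hab
    have hpos : 0 < a ^ 2 + b ^ 2 := by
      rcases not_and_or.mp hab with h | h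
      · have : (0:ℝ) < a ^ 2 := lt_of_le_of_ne (sq_nonneg a) (Ne.symm (pow_ne_zero 2 h))
        nlinarith [sq_nonneg b]
      · have : (0:ℝ) < b ^ 2 := lt_of_le_of_ne (sq_nonneg b) (Ne.symm (pow_ne_zero 2 h))
        nlinarith [sq_nonneg a]
    have hr2 : (Real.sqrt (a ^ 2 + b ^ 2)) ^ 2 = a ^ 2 + b ^ 2 :=
      Real.sq_sqrt hpos.le
    have hrne : Real.sqrt (a ^ 2 + b ^ 2) ≠ 0 := by
      intro h; rw [h] at hr2; nlinarith
    rw [hAB]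
    refine ⟨?_, eig_aux a b _ hr2, eig_aux a b _ (by rw [neg_pow]; simpa using hr2), hrne⟩
    · apply Module.End.hasEigenvalue_of_hasEigenvector (x := ![1, 0, 0])
      constructor
      · rw [Module.End.mem_eigenspace_iff, Matrix.toLin'_apply]
        funext i
        fin_cases i <;> simp [Matrix.mulVec, dotProduct, Fin.sum_univ_three]
      · intro h'
        have := congrFun h' 0
        simp at this
  · -- diagonalizable
    intro M hM
    rw [hV, Submodule.mem_span_pair] at hM
    obtain ⟨a, b, hab⟩ := hM
    rw [hAB] at hab
    by_cases hb : b = 0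
    · refine ⟨1, isUnit_one, ?_⟩
      rw [inv_one, one_mul, mul_one, ← hab, hb]
      intro i j hij
      fin_cases i <;> fin_cases j <;> simp_all [Matrix.vecHead, Matrix.vecTail]
    · set r := Real.sqrt (a ^ 2 + b ^ 2) with hr
      have hpos : 0 < a ^ 2 + b ^ 2 := by
        have : (0:ℝ) < b ^ 2 := lt_of_le_of_ne (sq_nonneg b) (Ne.symm (pow_ne_zero 2 hb))
        nlinarith [sq_nonneg a]
      have hr2 : r ^ 2 = a ^ 2 + b ^ 2 := Real.sq_sqrt hpos.le
      have hrne : r ≠ 0 := by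
        intro h; rw [h] at hr2; nlinarith
      set P : Matrix (Fin 3) (Fin 3) ℝ :=
        !![1, b^2, b^2; 0, r*b, -(r*b); 0, r^2 - r*a, r^2 + r*a] with hP
      set D : Matrix (Fin 3) (Fin 3) ℝ := !![0,0,0; 0,r,0; 0,0,-r] with hD
      have hdet : P.det = 2 * r^3 * b := by
        rw [hP, Matrix.det_fin_three]; simp [Matrix.vecHead, Matrix.vecTail]; ring
      have hdu : IsUnit P.det := by
        rw [hdet]
        exact isUnit_iff_ne_zero.mpr (by positivity)
      have hPu : IsUnit P := (Matrix.isUnit_iff_isUnit_det P).mpr hdu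
      have hMP : !![0,b,0;0,a,b;0,b,-a] * P = P * D := by
        rw [hP, hD]
        ext i j
        fin_cases i <;> fin_cases j <;>
          simp [Matrix.mul_apply, Fin.sum_univ_three, Matrix.vecHead, Matrix.vecTail] <;>
          first
            | ring1
            | linear_combination r * hr2
            | linear_combination (-r) * hr2
      refine ⟨P, hPu, ?_⟩
      have : P⁻¹ * M * P = D := by
        rw [← hab, Matrix.mul_assoc, hMP, ← Matrix.mul_assoc,
          Matrix.nonsing_inv_mul P hdu, one_mul]
      rw [this, hD]
      intro i j hij
      fin_cases i <;> fin_cases j <;> simp_all [Matrix.vecHead, Matrix.vecTail]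
  · -- not conjugate to symmetric
    rintro ⟨P, hPu, hsym⟩
    have hdu : IsUnit P.det := (Matrix.isUnit_iff_isUnit_det P).mp hPu
    have hPP : P⁻¹ * P = 1 := Matrix.nonsing_inv_mul P hdu
    have hAV : A ∈ V := by
      rw [hV]; exact Submodule.subset_span (Set.mem_insert _ _)
    have hBV : B ∈ V := by
      rw [hV]; exact Submodule.subset_span (Set.mem_insert_of_mem _ rfl)
    set S : Matrix (Fin 3) (Fin 3) ℝ := Pᵀ * P with hS
    have key : ∀ M : Matrix (Fin 3) (Fin 3) ℝ, (P * M * P⁻¹).IsSymm →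
        Mᵀ * S = S * M := by
      intro M hs
      have e := congrArg (fun X => Pᵀ * X * P) hs
      simp only [Matrix.transpose_mul] at e
      simp only [← Matrix.mul_assoc] at e
      rw [show Pᵀ * (P⁻¹)ᵀ = 1 by
        rw [← Matrix.transpose_mul, hPP, Matrix.transpose_one], one_mul] at e
      rw [Matrix.mul_assoc (Pᵀ * P * M) P⁻¹ P, hPP, Matrix.mul_one] at e
      rw [hS]
      rw [← Matrix.mul_assoc]
      exact e
    have h1 := key A (hsym A hAV)
    have h2 := key B (hsym B hBV)
    rw [hA] at h1
    rw [hB] at h2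
    have e02 := congrFun (congrFun h1 0) 2
    have e01 := congrFun (congrFun h2 0) 1
    simp [Matrix.mul_apply, Fin.sum_univ_three, Matrix.transpose_apply,
      Matrix.vecHead, Matrix.vecTail] at e02 e01
    have hS00 : S 0 0 = 0 := by linarith
    rw [hS] at hS00
    simp [Matrix.mul_apply, Fin.sum_univ_three, Matrix.transpose_apply] at hS00
    have k0 : 0 ≤ P 0 0 * P 0 0 := mul_self_nonneg _
    have k1 : 0 ≤ P 1 0 * P 1 0 := mul_self_nonneg _
    have k2 : 0 ≤ P 2 0 * P 2 0 := mul_self_nonneg _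
    have h00 : P 0 0 = 0 := mul_self_eq_zero.mp (by linarith)
    have h10 : P 1 0 = 0 := mul_self_eq_zero.mp (by linarith)
    have h20 : P 2 0 = 0 := mul_self_eq_zero.mp (by linarith)
    have hone := congrFun (congrFun hPP 0) 0
    simp [Matrix.mul_apply, Fin.sum_univ_three, h00, h10, h20, Matrix.one_apply] at hone
end
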